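/- Let A, B, C be real 2×2 matrices with A symmetric positive definite, B skew-symmetric, and C symmetric, and suppose D := (1/4) B A⁻¹ B + C − μ I is positive semidefinite for a real number μ. If X : ℝ → ℝ² is a C² solution of −A X″ + B X′ + C X = μ X, then the function f(s) = ⟨A X(s), X(s)⟩ is convex, i.e., f″(s) ≥ 0 for all s. -/

import Mathlib

/-!
Since `A` is symmetric, `f' = 2⟨AX', X⟩` and `f'' = 2(⟨AX'', X⟩ + ⟨AX', X'⟩)`. Eliminating `AX''`
with the equation and completing the square in `X'` (using that `B` is skew) gives
`f'' / 2 = ⟨Au, u⟩ + ⟨DX, X⟩` with `u = X' - ½ A⁻¹BX`, and both terms are nonnegative.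
-/

open Matrix

section

variable {n : Type*} [Fintype n]

theorem transpose_mulVec_dotProduct (M : Matrix n n ℝ) (x y : n → ℝ) :
    Mᵀ *ᵥ x ⬝ᵥ y = M *ᵥ y ⬝ᵥ x := by
  rw [mulVec_transpose, ← dotProduct_mulVec, dotProduct_comm]

theorem hasDerivAt_mulVec_dotProduct (M : Matrix n n ℝ) {x y : ℝ → n → ℝ} {x' y' : n → ℝ}
    {s : ℝ} (hx : HasDerivAt x x' s) (hy : HasDerivAt y y' s) :
    HasDerivAt (fun s => M *ᵥ x s ⬝ᵥ y s) (M *ᵥ x' ⬝ᵥ y s + M *ᵥ x s ⬝ᵥ y') s := by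
  simp only [mulVec, dotProduct, ← Finset.sum_add_distrib]
  refine HasDerivAt.fun_sum fun i _ => ?_
  exact (HasDerivAt.fun_sum fun j _ => (hasDerivAt_pi.1 hx j).const_mul (M i j)).mul
    (hasDerivAt_pi.1 hy i)

theorem hasDerivAt_mulVec_dotProduct_self {A : Matrix n n ℝ} (hA : Aᵀ = A) {x : ℝ → n → ℝ}
    {x' : n → ℝ} {s : ℝ} (hx : HasDerivAt x x' s) :
    HasDerivAt (fun s => A *ᵥ x s ⬝ᵥ x s) (2 * (A *ᵥ x' ⬝ᵥ x s)) s := by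
  convert hasDerivAt_mulVec_dotProduct A hx hx using 1
  rw [two_mul, ← transpose_mulVec_dotProduct, hA]

variable [DecidableEq n] {A B : Matrix n n ℝ}

theorem mulVec_dotProduct_completeSquare (hA : Aᵀ = A) (hdet : IsUnit A.det) (hB : Bᵀ = -B)
    (a v : n → ℝ) :
    A *ᵥ (v - (1/2 : ℝ) • (A⁻¹ * B) *ᵥ a) ⬝ᵥ (v - (1/2 : ℝ) • (A⁻¹ * B) *ᵥ a)
      = A *ᵥ v ⬝ᵥ v + B *ᵥ v ⬝ᵥ a - (1/4 : ℝ) * ((B * A⁻¹ * B) *ᵥ a ⬝ᵥ a) := by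
  have hAz : A *ᵥ (A⁻¹ * B) *ᵥ a = B *ᵥ a := by
    rw [mulVec_mulVec, ← Matrix.mul_assoc, mul_nonsing_inv A hdet, Matrix.one_mul]
  have hcross : A *ᵥ v ⬝ᵥ (A⁻¹ * B) *ᵥ a = -(B *ᵥ v ⬝ᵥ a) := by
    rw [← transpose_mulVec_dotProduct, hA, hAz, ← transpose_mulVec_dotProduct, hB, neg_mulVec,
      neg_dotProduct]
  have hquad : B *ᵥ a ⬝ᵥ (A⁻¹ * B) *ᵥ a = -((B * A⁻¹ * B) *ᵥ a ⬝ᵥ a) := by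
    rw [← transpose_mulVec_dotProduct, hB, neg_mulVec, neg_dotProduct, mulVec_mulVec,
      Matrix.mul_assoc, dotProduct_comm]
  rw [mulVec_sub, mulVec_smul, hAz]
  simp only [sub_dotProduct, dotProduct_sub, smul_dotProduct, dotProduct_smul, smul_eq_mul]
  have hskew : B *ᵥ a ⬝ᵥ v = -(B *ᵥ v ⬝ᵥ a) := by
    rw [← transpose_mulVec_dotProduct, hB, neg_mulVec, neg_dotProduct]
  rw [hcross, hquad, hskew]
  ring

theorem mulVec_dotProduct_add_nonneg_of_eq {C : Matrix n n ℝ} {μ : ℝ} (hA : A.PosDef)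
    (hB : Bᵀ = -B) (hD : ((1/4 : ℝ) • (B * A⁻¹ * B) + C - μ • (1 : Matrix n n ℝ)).PosSemidef)
    {a v w : n → ℝ} (h : -(A *ᵥ w) + B *ᵥ v + C *ᵥ a = μ • a) :
    0 ≤ A *ᵥ w ⬝ᵥ a + A *ᵥ v ⬝ᵥ v := by
  set D := (1/4 : ℝ) • (B * A⁻¹ * B) + C - μ • (1 : Matrix n n ℝ)
  set u := v - (1/2 : ℝ) • (A⁻¹ * B) *ᵥ a
  have hAT : Aᵀ = A := (isHermitian_iff_isSymm.1 hA.isHermitian).eq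
  have hdet : IsUnit A.det := (A.isUnit_iff_isUnit_det).1 hA.isUnit
  have hAw : A *ᵥ w = B *ᵥ v + C *ᵥ a - μ • a := by rw [← h]; abel
  have hDa : D *ᵥ a ⬝ᵥ a
      = (1/4 : ℝ) * ((B * A⁻¹ * B) *ᵥ a ⬝ᵥ a) + C *ᵥ a ⬝ᵥ a - μ * (a ⬝ᵥ a) := by
    simp only [D, sub_mulVec, add_mulVec, smul_mulVec, one_mulVec, sub_dotProduct,
      add_dotProduct, smul_dotProduct, smul_eq_mul]
  have hsplit : A *ᵥ w ⬝ᵥ a + A *ᵥ v ⬝ᵥ v = A *ᵥ u ⬝ᵥ u + D *ᵥ a ⬝ᵥ a := by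
    rw [mulVec_dotProduct_completeSquare hAT hdet hB, hDa, hAw]
    simp only [sub_dotProduct, add_dotProduct, smul_dotProduct, smul_eq_mul]
    ring
  rw [hsplit]
  exact add_nonneg (by simpa [dotProduct_comm] using hA.posSemidef.dotProduct_mulVec_nonneg u)
    (by simpa [dotProduct_comm] using hD.dotProduct_mulVec_nonneg a)

end

theorem stmt3_general (A B C : Matrix (Fin 2) (Fin 2) ℝ) (μ : ℝ)
    (hA : A.PosDef) (hB : Bᵀ = -B)
    (hD : ((1/4 : ℝ) • (B * A⁻¹ * B) + C - μ • (1 : Matrix (Fin 2) (Fin 2) ℝ)).PosSemidef)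
    (X : ℝ → Fin 2 → ℝ) (hX : ContDiff ℝ 2 X)
    (hODE : ∀ s, -(A.mulVec (deriv (deriv X) s)) + B.mulVec (deriv X s)
        + C.mulVec (X s) = μ • X s) :
    (∀ s, 0 ≤ deriv (deriv (fun s => A.mulVec (X s) ⬝ᵥ X s)) s)
    ∧ ConvexOn ℝ Set.univ (fun s => A.mulVec (X s) ⬝ᵥ X s) := by
  have hAT : Aᵀ = A := (isHermitian_iff_isSymm.1 hA.isHermitian).eq
  have hX' : ∀ s, HasDerivAt X (deriv X s) s :=
    fun s => (hX.differentiable (by norm_num) s).hasDerivAt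
  have hX'' : ∀ s, HasDerivAt (deriv X) (deriv (deriv X) s) s :=
    fun s => ((hX.deriv' (n := 1)).differentiable one_ne_zero s).hasDerivAt
  have hf' := fun s => hasDerivAt_mulVec_dotProduct_self hAT (hX' s)
  have hf'' : ∀ s, HasDerivAt (deriv fun s => A *ᵥ X s ⬝ᵥ X s)
      (2 * (A *ᵥ deriv (deriv X) s ⬝ᵥ X s + A *ᵥ deriv X s ⬝ᵥ deriv X s)) s := by
    rw [funext fun s => (hf' s).deriv]
    exact fun s => (hasDerivAt_mulVec_dotProduct A (hX'' s) (hX' s)).const_mul 2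
  have hnonneg : ∀ s, 0 ≤ deriv (deriv fun s => A *ᵥ X s ⬝ᵥ X s) s := fun s => by
    rw [(hf'' s).deriv]
    exact mul_nonneg zero_le_two (mulVec_dotProduct_add_nonneg_of_eq hA hB hD (hODE s))
  exact ⟨hnonneg, convexOn_univ_of_deriv2_nonneg (fun s => (hf' s).differentiableAt)
    (fun s => (hf'' s).differentiableAt) hnonneg⟩

/-- If A is symmetric positive definite, B skew, C symmetric, and
D = (1/4)BA⁻¹B + C − μI is positive semidefinite, then for any C² solution X of
−AX″ + BX′ + CX = μX, the function f(s) = ⟨AX(s), X(s)⟩ is convex (f″ ≥ 0). -/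
theorem stmt3 (A B C : Matrix (Fin 2) (Fin 2) ℝ) (μ : ℝ)
    (hA : A.PosDef) (hB : Bᵀ = -B) (hC : Cᵀ = C)
    (hD : ((1/4 : ℝ) • (B * A⁻¹ * B) + C - μ • (1 : Matrix (Fin 2) (Fin 2) ℝ)).PosSemidef)
    (X : ℝ → Fin 2 → ℝ) (hX : ContDiff ℝ 2 X)
    (hODE : ∀ s, -(A.mulVec (deriv (deriv X) s)) + B.mulVec (deriv X s)
        + C.mulVec (X s) = μ • X s) :
    (∀ s, 0 ≤ deriv (deriv (fun s => A.mulVec (X s) ⬝ᵥ X s)) s)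
    ∧ ConvexOn ℝ Set.univ (fun s => A.mulVec (X s) ⬝ᵥ X s) :=
  stmt3_general A B C μ hA hB hD X hX hODE
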